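/- Let F: 𝒢 → 𝒢′ and F′: 𝒢′ → 𝒢″ be functors between finite groupoids, V a rational vector space, and f: π₀(𝒢) → V a function. Then F′_*(F_* f) = (F′ ∘ F)_* f as functions π₀(𝒢″) → V. -/

import Mathlib

open CategoryTheory
open CategoryTheory

/-- The set of isomorphism classes of objects of a category. -/
abbrev PiZero (C : Type*) [Category C] := Quotient (isIsomorphicSetoid C)

/-- The orbisum `∫_C f = ∑_{[x]} f(x)/|Aut(x)|` of a vector-valued function on
isomorphism classes. -/
noncomputable def orbisum {C : Type*} [Category C] {V : Type*} [AddCommGroup V] [Module ℚ V]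
    (f : PiZero C → V) : V :=
  ∑ᶠ c : PiZero C, ((Nat.card (Aut (Quotient.out c)) : ℚ))⁻¹ • f c

/-- The push-forward `F_* f`, defined by orbisums over comma categories `(F ↓ h)`. -/
noncomputable def pushforward {C D : Type*} [Category C] [Category D] (F : C ⥤ D)
    {V : Type*} [AddCommGroup V] [Module ℚ V] (f : PiZero C → V) : PiZero D → V :=
  fun h => orbisum (fun c : PiZero (CostructuredArrow F (Quotient.out h)) =>
    f (Quotient.mk (isIsomorphicSetoid C) (Quotient.out c).left))

/-!
The classes of `P ↓ b` lying over the class of `a` are the orbits of `Aut a` acting on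
`P a ⟶ b` by precomposition, and their automorphism groups are the stabilizers. Orbit–stabilizer
then gives `(P_* g)(b) = ∑_[a] |Hom(P a, b)| / |Aut a| • g(a)`, and since in a groupoid
`∑_[b] |Hom(y, b)| / |Aut b| = 1`, integrating over `b` yields `∫ P_* g = ∫ g`.
For the composite, the comma category of `pre F F' h` over `(d, ψ) : F' ↓ h` is equivalent to
`F ↓ d`, so `F'_*(F_* f)(h) = ∫_{F' ↓ h} (pre F F' h)_* f = ∫_{F ⋙ F' ↓ h} f`.
-/

attribute [local instance] isIsomorphicSetoid

theorem MulAction.sum_image_eq_card_div_card {G X Y : Type*} [Group G] [MulAction G X]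
    [Fintype G] [Fintype X] [DecidableEq Y] (q : X → Y)
    (hq : ∀ x x', q x = q x' ↔ x' ∈ orbit G x) (w : Y → ℚ)
    (hw : ∀ x, w (q x) = (Nat.card (stabilizer G x) : ℚ)⁻¹) :
    ∑ y ∈ Finset.univ.image q, w y = Fintype.card X / Fintype.card G := by
  have hsum : (Fintype.card X : ℚ) / Fintype.card G = ∑ _x : X, (Fintype.card G : ℚ)⁻¹ := by
    simp [div_eq_mul_inv]
  rw [hsum]
  refine Finset.sum_image' _ fun x _ => ?_
  have hfiber : (Finset.univ.filter fun x' => q x' = q x).card = Nat.card (orbit G x) := by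
    rw [← Fintype.card_subtype, ← Nat.card_eq_fintype_card]
    exact Nat.card_congr (Equiv.subtypeEquivRight fun x' => by rw [eq_comm, hq])
  have hcard : Nat.card (stabilizer G x) * Nat.card (orbit G x) = Fintype.card G := by
    rw [Nat.card_coe_set_eq, ← index_stabilizer, Subgroup.card_mul_index,
      Nat.card_eq_fintype_card]
  have hstab : (Nat.card (stabilizer G x) : ℚ) ≠ 0 := by
    have : 0 < Nat.card (stabilizer G x) := Nat.card_pos
    positivity
  have horbit : (Nat.card (orbit G x) : ℚ) ≠ 0 := by
    have : Nonempty (orbit G x) := ⟨⟨x, mem_orbit_self x⟩⟩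
    have : 0 < Nat.card (orbit G x) := Nat.card_pos
    positivity
  rw [Finset.sum_const, nsmul_eq_mul, hw, hfiber, ← hcard]
  push_cast
  field_simp

namespace PiZero

variable {A B : Type*} [Category A] [Category B]

def map (Φ : A ⥤ B) : PiZero A → PiZero B :=
  Quotient.map Φ.obj fun _ _ ⟨e⟩ => ⟨Φ.mapIso e⟩

@[simp]
theorem map_mk (Φ : A ⥤ B) (x : A) : map Φ ⟦x⟧ = ⟦Φ.obj x⟧ := rfl

theorem mk_obj_out (Φ : A ⥤ B) (c : PiZero A) : ⟦Φ.obj c.out⟧ = map Φ c := by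
  conv_rhs => rw [← Quotient.out_eq c]
  rfl

def mapEquiv (e : A ≌ B) : PiZero A ≃ PiZero B where
  toFun := map e.functor
  invFun := map e.inverse
  left_inv := Quotient.ind fun x => Quotient.sound ⟨(e.unitIso.app x).symm⟩
  right_inv := Quotient.ind fun y => Quotient.sound ⟨e.counitIso.app y⟩

noncomputable def outMkIso (x : A) : (⟦x⟧ : PiZero A).out ≅ x :=
  Classical.choice (Quotient.mk_out x)

theorem card_aut_out_mk (x : A) : Nat.card (Aut (⟦x⟧ : PiZero A).out) = Nat.card (Aut x) :=
  Nat.card_congr (Aut.autMulEquivOfIso (outMkIso x)).toEquiv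

end PiZero

section orbisum

variable {A B : Type*} [Category A] [Category B] {V : Type*} [AddCommGroup V] [Module ℚ V]

theorem orbisum_eq_sum [Fintype (PiZero A)] (g : PiZero A → V) :
    orbisum g = ∑ c, (Nat.card (Aut c.out) : ℚ)⁻¹ • g c :=
  finsum_eq_sum_of_fintype _

theorem orbisum_comp_map_equivalence (e : A ≌ B) (g : PiZero B → V) :
    orbisum (g ∘ PiZero.map e.functor) = orbisum g := by
  rw [orbisum, orbisum, ← finsum_comp_equiv (PiZero.mapEquiv e)]
  refine finsum_congr fun c => ?_
  induction c using Quotient.ind with | _ x => ?_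
  have hcard : Nat.card (Aut (e.functor.obj x)) = Nat.card (Aut x) :=
    Nat.card_congr (e.fullyFaithfulFunctor.autMulEquivOfFullyFaithful x).toEquiv.symm
  simp [PiZero.mapEquiv, PiZero.card_aut_out_mk, hcard]

theorem pushforward_eq (P : A ⥤ B) (g : PiZero A → V) (b : PiZero B) :
    pushforward P g b = orbisum (g ∘ PiZero.map (CostructuredArrow.proj P b.out)) := by
  unfold pushforward
  congr 1
  funext c
  exact congrArg g (PiZero.mk_obj_out (CostructuredArrow.proj P b.out) c)

theorem pushforward_mk (P : A ⥤ B) (g : PiZero A → V) (y : B) :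
    pushforward P g ⟦y⟧ = orbisum (g ∘ PiZero.map (CostructuredArrow.proj P y)) := by
  rw [pushforward_eq,
    ← orbisum_comp_map_equivalence (CostructuredArrow.mapIso (PiZero.outMkIso y))]
  congr 1
  funext c
  induction c using Quotient.ind
  rfl

end orbisum

section groupoid

variable {B : Type*} [Category B] [IsGroupoid B]

noncomputable def IsGroupoid.endEquivAut (y : B) : (y ⟶ y) ≃ Aut y where
  toFun f := asIso f
  invFun := Iso.hom
  left_inv _ := rfl
  right_inv e := Iso.ext (asIso_hom e.hom)

theorem IsGroupoid.card_hom_eq_card_aut {x y : B} (e : x ≅ y) :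
    Nat.card (x ⟶ y) = Nat.card (Aut y) :=
  Nat.card_congr ((e.homCongr (Iso.refl y)).trans (IsGroupoid.endEquivAut y))

instance [∀ y : B, Finite (Aut y)] (x y : B) : Finite (x ⟶ y) := by
  rcases isEmpty_or_nonempty (x ⟶ y) with h | ⟨⟨f⟩⟩
  · infer_instance
  · exact Finite.of_equiv _ (((asIso f).homCongr (Iso.refl y)).trans
      (IsGroupoid.endEquivAut y)).symm

theorem sum_card_hom_div_card_aut [∀ y : B, Finite (Aut y)] [Fintype (PiZero B)] (x : B) :
    ∑ b : PiZero B, (Nat.card (x ⟶ b.out) : ℚ) / Nat.card (Aut b.out) = 1 := by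
  rw [Finset.sum_eq_single ⟦x⟧]
  · rw [IsGroupoid.card_hom_eq_card_aut (PiZero.outMkIso x).symm, div_self]
    exact Nat.cast_ne_zero.mpr Nat.card_pos.ne'
  · intro b _ hb
    have : IsEmpty (x ⟶ b.out) :=
      ⟨fun f => hb (((Quotient.sound ⟨asIso f⟩ : (⟦x⟧ : PiZero B) = ⟦b.out⟧)).trans
        (Quotient.out_eq b)).symm⟩
    simp
  · simp

end groupoid

namespace CategoryTheory.CostructuredArrow

variable {A B : Type*} [Category A] [Category B] (P : A ⥤ B)

instance [IsGroupoid A] (b : B) : IsGroupoid (CostructuredArrow P b) :=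
  isGroupoid_of_reflects_iso (proj P b)

instance [∀ x : A, Finite (Aut x)] (b : B) (k : CostructuredArrow P b) : Finite (Aut k) :=
  Finite.of_injective (Functor.mapAut k (proj P b)) (proj P b).mapIso_injective

instance [Finite (PiZero A)] [∀ x y : B, Finite (x ⟶ y)] (b : B) :
    Finite (PiZero (CostructuredArrow P b)) := by
  refine Finite.of_surjective
    (fun p : Σ c : PiZero A, (P.obj c.out ⟶ b) => (⟦mk p.2⟧ : PiZero (CostructuredArrow P b)))
    (Quotient.ind fun k => ?_)
  exact ⟨⟨⟦k.left⟧, P.map (PiZero.outMkIso k.left).hom ≫ k.hom⟩,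
    _root_.Quotient.sound ⟨isoMk (PiZero.outMkIso k.left)⟩⟩

variable (a : A) (b : B)

abbrev autHomAction : MulAction (Aut a) (P.obj a ⟶ b) where
  smul α φ := P.map α.inv ≫ φ
  one_smul φ := by
    change P.map (𝟙 a) ≫ φ = φ
    simp
  mul_smul α β φ := by
    change P.map (α.inv ≫ β.inv) ≫ φ = P.map α.inv ≫ P.map β.inv ≫ φ
    simp

attribute [local instance] autHomAction

variable {P a b}

theorem isIsomorphic_mk_iff_mem_orbit {φ φ' : P.obj a ⟶ b} :
    IsIsomorphic (mk φ) (mk φ') ↔ φ' ∈ MulAction.orbit (Aut a) φ := by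
  constructor
  · rintro ⟨e⟩
    refine ⟨(proj P b).mapIso e, ?_⟩
    change P.map e.inv.left ≫ φ = φ'
    simpa using w e.inv
  · rintro ⟨α, rfl⟩
    exact ⟨isoMk α ((P.mapIso α).hom_inv_id_assoc φ)⟩

def autMkEquivStabilizer (φ : P.obj a ⟶ b) : Aut (mk φ) ≃ MulAction.stabilizer (Aut a) φ where
  toFun e := ⟨(proj P b).mapIso e, by
    change P.map e.inv.left ≫ φ = φ
    simpa using w e.inv⟩
  invFun α := isoMk α.1 (by
    have h : P.map α.1.inv ≫ φ = φ := α.2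
    calc P.map α.1.hom ≫ φ = P.map α.1.hom ≫ P.map α.1.inv ≫ φ := by rw [h]
      _ = φ := (P.mapIso α.1).hom_inv_id_assoc φ)
  left_inv e := by ext; rfl
  right_inv α := by ext; rfl

theorem filter_map_proj_eq_image [Fintype (PiZero (CostructuredArrow P b))]
    [DecidableEq (PiZero A)] [DecidableEq (PiZero (CostructuredArrow P b))]
    [Fintype (P.obj a ⟶ b)] :
    Finset.univ.filter (fun k => PiZero.map (proj P b) k = ⟦a⟧) =
      Finset.univ.image fun φ : P.obj a ⟶ b => (⟦mk φ⟧ : PiZero (CostructuredArrow P b)) := by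
  ext k
  induction k using Quotient.ind with | _ k => ?_
  simp only [Finset.mem_filter, Finset.mem_univ, true_and, Finset.mem_image, PiZero.map_mk]
  constructor
  · intro h
    obtain ⟨e⟩ := _root_.Quotient.exact h
    exact ⟨P.map e.inv ≫ k.hom, _root_.Quotient.sound ⟨isoMk e.symm⟩⟩
  · rintro ⟨φ, h⟩
    obtain ⟨e⟩ := _root_.Quotient.exact h
    exact _root_.Quotient.sound ⟨((proj P b).mapIso e).symm⟩

theorem sum_filter_inv_card_aut_eq [Fintype (PiZero (CostructuredArrow P b))]
    [DecidableEq (PiZero A)] [Finite (Aut a)] [Finite (P.obj a ⟶ b)] :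
    ∑ k with PiZero.map (proj P b) k = ⟦a⟧, (Nat.card (Aut k.out) : ℚ)⁻¹ =
      Nat.card (P.obj a ⟶ b) / Nat.card (Aut a) := by
  classical
  have := Fintype.ofFinite (Aut a)
  have := Fintype.ofFinite (P.obj a ⟶ b)
  rw [filter_map_proj_eq_image, Nat.card_eq_fintype_card, Nat.card_eq_fintype_card]
  refine MulAction.sum_image_eq_card_div_card _
    (fun _ _ => Quotient.eq.trans isIsomorphic_mk_iff_mem_orbit) _ fun φ => ?_
  rw [PiZero.card_aut_out_mk, Nat.card_congr (autMkEquivStabilizer φ)]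

end CategoryTheory.CostructuredArrow

section pushforward

open CostructuredArrow

variable {A B : Type*} [Category A] [Category B] {V : Type*} [AddCommGroup V] [Module ℚ V]

theorem pushforward_eq_sum [Fintype (PiZero A)] [∀ x : A, Finite (Aut x)]
    [∀ x y : B, Finite (x ⟶ y)] (P : A ⥤ B) (g : PiZero A → V) (b : PiZero B) :
    pushforward P g b =
      ∑ c, ((Nat.card (P.obj c.out ⟶ b.out) : ℚ) / Nat.card (Aut c.out)) • g c := by
  classical
  have := Fintype.ofFinite (PiZero (CostructuredArrow P b.out))
  rw [pushforward_eq, orbisum_eq_sum,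
    ← Finset.sum_fiberwise Finset.univ (PiZero.map (proj P b.out))]
  refine Finset.sum_congr rfl fun c _ => ?_
  have hfiber := sum_filter_inv_card_aut_eq (P := P) (a := c.out) (b := b.out)
  rw [Quotient.out_eq] at hfiber
  rw [← hfiber, Finset.sum_smul]
  refine Finset.sum_congr rfl fun k hk => ?_
  rw [Function.comp_apply, (Finset.mem_filter.mp hk).2]

theorem orbisum_pushforward [Finite (PiZero A)] [∀ x : A, Finite (Aut x)] [IsGroupoid B]
    [Finite (PiZero B)] [∀ y : B, Finite (Aut y)] (P : A ⥤ B) (g : PiZero A → V) :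
    orbisum (pushforward P g) = orbisum g := by
  classical
  have := Fintype.ofFinite (PiZero A)
  have := Fintype.ofFinite (PiZero B)
  calc orbisum (pushforward P g)
      = ∑ b : PiZero B, ∑ c, ((Nat.card (Aut b.out) : ℚ)⁻¹ *
          (Nat.card (P.obj c.out ⟶ b.out) / Nat.card (Aut c.out))) • g c := by
        simp only [orbisum_eq_sum, pushforward_eq_sum, Finset.smul_sum, smul_smul]
    _ = ∑ c, ((∑ b : PiZero B, (Nat.card (P.obj c.out ⟶ b.out) : ℚ) / Nat.card (Aut b.out)) *
          (Nat.card (Aut c.out) : ℚ)⁻¹) • g c := by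
        rw [Finset.sum_comm]
        refine Finset.sum_congr rfl fun c _ => ?_
        rw [Finset.sum_mul, Finset.sum_smul]
        congr! 2 with b
        ring
    _ = orbisum g := by
        simp only [sum_card_hom_div_card_aut, one_mul, orbisum_eq_sum]

theorem pushforward_comp_map_proj {E : Type*} [Category E] (F : A ⥤ B) (F' : B ⥤ E)
    (f : PiZero A → V) (z : E) :
    pushforward F f ∘ PiZero.map (proj F' z) =
      pushforward (pre F F' z) (f ∘ PiZero.map (proj (F ⋙ F') z)) := by
  funext k
  induction k using Quotient.ind with | _ y => ?_
  rw [Function.comp_apply, PiZero.map_mk, pushforward_mk, pushforward_mk]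
  refine (orbisum_comp_map_equivalence (preEquivalence F y) _).symm.trans (congrArg orbisum ?_)
  funext c
  induction c using Quotient.ind
  rfl

end pushforward

theorem pushforward_comp_general {C D E : Type*} [Groupoid C] [Groupoid D] [Groupoid E]
    (hC : Finite (PiZero C)) (hCa : ∀ x : C, Finite (Aut x))
    (hD : Finite (PiZero D)) (hDa : ∀ y : D, Finite (Aut y))
    (hEa : ∀ z : E, Finite (Aut z))
    {V : Type*} [AddCommGroup V] [Module ℚ V]
    (F : C ⥤ D) (F' : D ⥤ E) (f : PiZero C → V) :
    pushforward F' (pushforward F f) = pushforward (F ⋙ F') f := by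
  funext h
  obtain ⟨z, rfl⟩ := Quotient.exists_rep h
  rw [pushforward_mk, pushforward_mk, pushforward_comp_map_proj, orbisum_pushforward]

/-- Push-forwards of orbisum-valued functions compose: `F′_*(F_* f) = (F′ ∘ F)_* f`. -/
theorem pushforward_comp {C D E : Type*} [Groupoid C] [Groupoid D] [Groupoid E]
    (hC : Finite (PiZero C)) (hCa : ∀ x : C, Finite (Aut x))
    (hD : Finite (PiZero D)) (hDa : ∀ y : D, Finite (Aut y))
    (hE : Finite (PiZero E)) (hEa : ∀ z : E, Finite (Aut z))
    {V : Type*} [AddCommGroup V] [Module ℚ V]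
    (F : C ⥤ D) (F' : D ⥤ E) (f : PiZero C → V) :
    pushforward F' (pushforward F f) = pushforward (F ⋙ F') f :=
  pushforward_comp_general hC hCa hD hDa hEa F F' f
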